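/- Let G be a finite group, Z ≤ Z(G), and φ ∈ Irr(Z). The set B(G)_φ = {e_φ[K_j] : X ≤ ker φ, j ∈ I(G:Z)_X} is a basis of e_φ·Z(ℂG), and dim e_φ·Z(ℂG) = |I(G/ker φ : Z/ker φ)_{1}|. -/

import Mathlib

open scoped Pointwise BigOperators

set_option synthInstance.maxHeartbeats 1000000
set_option maxHeartbeats 1000000

noncomputable section HaradaPreamble

/-- The semilinear anti-automorphism of the complex group algebra sending `[g]` to `[g⁻¹]`
and conjugating coefficients. -/
def gaStar {G : Type*} [Group G] (u : MonoidAlgebra ℂ G) : MonoidAlgebra ℂ G :=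
  ∑ᶠ g : G, MonoidAlgebra.single g⁻¹ ((starRingEnd ℂ) (u.coeff g))

/-- Multiplication by `x` as a linear endomorphism of the center `Z(ℂG)` of the group algebra,
defined to be `0` if `x` is not central. -/
def centerMulHom {G : Type*} [Group G] (x : MonoidAlgebra ℂ G) :
    Subalgebra.center ℂ (MonoidAlgebra ℂ G) →ₗ[ℂ] Subalgebra.center ℂ (MonoidAlgebra ℂ G) :=
  letI := Classical.dec (x ∈ Subalgebra.center ℂ (MonoidAlgebra ℂ G))
  if h : x ∈ Subalgebra.center ℂ (MonoidAlgebra ℂ G) then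
    LinearMap.mulLeft ℂ (⟨x, h⟩ : Subalgebra.center ℂ (MonoidAlgebra ℂ G))
  else 0

/-- The Hermitian form `⟨u|v⟩ = tr_{Z(ℂG)}(ū v)` on the group algebra. -/
def hform {G : Type*} [Group G] (u v : MonoidAlgebra ℂ G) : ℂ :=
  LinearMap.trace ℂ _ (centerMulHom (gaStar u * v))

/-- The class sum `[K] = ∑_{x ∈ K} [x]` of a conjugacy class. -/
def classSum {G : Type*} [Group G] (K : ConjClasses G) : MonoidAlgebra ℂ G :=
  ∑ᶠ g ∈ K.carrier, MonoidAlgebra.single g (1 : ℂ)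

/-- `χ : G → ℂ` is an irreducible complex character: the trace of a finite-dimensional
complex representation which is nonzero and has no nontrivial invariant subspaces. -/
def IsIrrChar {G : Type*} [Group G] (χ : G → ℂ) : Prop :=
  ∃ (V : Type) (_ : AddCommGroup V) (_ : Module ℂ V) (_ : FiniteDimensional ℂ V)
    (ρ : Representation ℂ G V), Nontrivial V ∧
    (∀ W : Submodule ℂ V, (∀ g : G, W.map (ρ g) ≤ W) → W = ⊥ ∨ W = ⊤) ∧
    χ = fun g => LinearMap.trace ℂ V (ρ g)

/-- The set of irreducible complex characters of `G`. -/
def irrChars (G : Type*) [Group G] : Set (G → ℂ) :=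
  {χ | IsIrrChar χ}

/-- Harada's number `h(G)`: the product of all conjugacy class sizes divided by the
product of the degrees of all irreducible complex characters. -/
def haradaNumber (G : Type*) [Group G] : ℂ :=
  (∏ᶠ c : ConjClasses G, (Nat.card c.carrier : ℂ)) / ∏ᶠ χ ∈ irrChars G, χ 1

/-- `c(G) = ∏ |C_G(g_i)|`, the product of centralizer orders over conjugacy class
representatives. -/
def cG (G : Type*) [Group G] : ℕ :=
  ∏ᶠ c : ConjClasses G, Nat.card (Subgroup.centralizer {Quotient.out c} : Subgroup G)

/-- `γ(G)`: the absolute value of the Gramian determinant of the class sums with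
respect to the trace form on `Z(ℂG)`. -/
def gammaG (G : Type*) [Group G] [Finite G] : ℝ :=
  letI : Fintype (ConjClasses G) := Fintype.ofFinite _
  letI : DecidableEq (ConjClasses G) := Classical.decEq _
  ‖(Matrix.det (Matrix.of fun i j : ConjClasses G =>
    hform (classSum i) (classSum j)))‖

/-- `Ann_Z(K) = {z ∈ Z | zK = K}`, as a subgroup of `Z`. -/
def annZ {G : Type*} [Group G] (Z : Subgroup G) (K : ConjClasses G) : Subgroup ↥Z :=
  (MulAction.stabilizer G K.carrier).comap Z.subtype

/-- The equivalence relation on conjugacy classes (satisfying `P`) given by translation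
by elements of the central subgroup `Z`. -/
def zSetoid {G : Type*} [Group G] (Z : Subgroup G) (P : ConjClasses G → Prop) :
    Setoid {K : ConjClasses G // P K} where
  r K L := ∃ z ∈ Z, z • K.1.carrier = L.1.carrier
  iseqv := by
    constructor
    · exact fun K => ⟨1, one_mem Z, one_smul _ _⟩
    · rintro K L ⟨z, hz, h⟩
      exact ⟨z⁻¹, inv_mem hz, by rw [← h, inv_smul_smul]⟩
    · rintro K L M ⟨z, hz, h⟩ ⟨w, hw, h'⟩
      exact ⟨w * z, mul_mem hw hz, by rw [mul_smul, h, h']⟩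

/-- `|I(G:Z)_N|`: the number of `Z`-orbits of conjugacy classes `K` of `G` with
`Ann_Z(K) = N`. -/
def nIGZ (G : Type*) [Group G] (Z : Subgroup G) (N : Subgroup ↥Z) : ℕ :=
  Nat.card (Quotient (zSetoid Z fun K => annZ Z K = N))

/-- The index set of the basis `B(G)_φ`: `Z`-orbits of conjugacy classes `K` with
`Ann_Z(K) ≤ ker φ`. -/
abbrev RepIdx (G : Type*) [Group G] (Z : Subgroup G) (φ : ↥Z →* ℂˣ) :=
  Quotient (zSetoid Z fun K => annZ Z K ≤ φ.ker)

/-- A chosen representative conjugacy class for each index in `RepIdx`. -/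
def repClass {G : Type*} [Group G] {Z : Subgroup G} {φ : ↥Z →* ℂˣ} (o : RepIdx G Z φ) :
    ConjClasses G := (Quotient.out o).1

/-- The central idempotent `e_φ = (1/|Z|) ∑_{z ∈ Z} conj(φ(z)) [z]`. -/
def ephi {G : Type*} [Group G] (Z : Subgroup G) (φ : ↥Z →* ℂˣ) : MonoidAlgebra ℂ G :=
  (Nat.card Z : ℂ)⁻¹ • ∑ᶠ z : ↥Z, MonoidAlgebra.single (z : G) ((starRingEnd ℂ) (φ z : ℂ))

/-- `γ_φ(G)`: the absolute value of the Gramian determinant of the family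
`e_φ [K_j]`, `j ∈ I(G:Z)_X`, `X ≤ ker φ`. -/
def gammaPhi (G : Type*) [Group G] [Finite G] (Z : Subgroup G) (φ : ↥Z →* ℂˣ) : ℝ :=
  letI : Fintype (RepIdx G Z φ) := Fintype.ofFinite _
  letI : DecidableEq (RepIdx G Z φ) := Classical.decEq _
  ‖(Matrix.det (Matrix.of fun i j : RepIdx G Z φ =>
    hform (ephi Z φ * classSum (repClass i)) (ephi Z φ * classSum (repClass j))))‖

/-- `c_φ(G) = ∏_{N ≤ ker φ} ∏_{j ∈ I(G:Z)_N} |C_G(g_j)| / |Z/N|`. -/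
def cPhi (G : Type*) [Group G] (Z : Subgroup G) (φ : ↥Z →* ℂˣ) : ℚ :=
  ∏ᶠ o : RepIdx G Z φ,
    ((Nat.card (Subgroup.centralizer {Quotient.out (repClass o)} : Subgroup G) : ℚ) /
      ((annZ Z (repClass o)).index : ℚ))

/-- `μ_φ(G) = γ_φ(G) / c_φ(G)`. -/
def muPhi (G : Type*) [Group G] [Finite G] (Z : Subgroup G) (φ : ↥Z →* ℂˣ) : ℝ :=
  gammaPhi G Z φ / (cPhi G Z φ : ℝ)

/-- `κ_N(G) = ∏_{X ≤ N} |X| ^ |I(G:Z)_X|`. -/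
def kappaN (G : Type*) [Group G] (Z : Subgroup G) (N : Subgroup ↥Z) : ℕ :=
  ∏ᶠ X ∈ {X : Subgroup ↥Z | X ≤ N}, Nat.card X ^ nIGZ G Z X

end HaradaPreamble

/-!
Since `Z` is central, translation by `z ∈ Z` permutes the conjugacy classes, `[z][K] = [zK]`,
and `e_φ [z] = conj (φ z⁻¹) • e_φ`. So `e_φ [zK]` is a multiple of `e_φ [K]`, and `e_φ Z(ℂG)`
is spanned by one `e_φ [K]` per `Z`-orbit. If some `z ∈ Ann_Z(K)` has `φ z ≠ 1`, then
`e_φ [K] = e_φ [z][K] = conj (φ z⁻¹) • e_φ [K]` forces `e_φ [K] = 0`. Otherwise `e_φ [K]`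
is supported on the orbit `ZK` and has coefficient `|Ann_Z(K)| / |Z| ≠ 0` on `K`, which gives
linear independence. Finally, with `N = ker φ`, the map `K ↦ KN/N` identifies the `Z`-orbits
of classes with `Ann_Z(K) ≤ N` with the `Z/N`-orbits of classes of `G/N` with trivial
annihilator, because `Ann_{Z/N}(KN/N) = Ann_Z(K)N/N`.
-/

namespace ConjClasses

variable {G : Type*} [Group G]

theorem map_mk {H : Type*} [Group H] (f : G →* H) (a : G) :
    map f (ConjClasses.mk a) = ConjClasses.mk (f a) :=
  rfl

theorem carrier_injective : Function.Injective (carrier : ConjClasses G → Set G) := by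
  intro K L h
  obtain ⟨a, rfl⟩ := exists_rep K
  rw [← mem_carrier_iff_mk_eq, ← h]
  exact mem_carrier_mk

theorem out_mem_carrier (K : ConjClasses G) : Quotient.out K ∈ K.carrier :=
  mem_carrier_iff_mk_eq.2 (Quotient.out_eq K)

theorem eq_of_mem_carrier {K L : ConjClasses G} {g : G} (hK : g ∈ K.carrier)
    (hL : g ∈ L.carrier) : K = L :=
  (mem_carrier_iff_mk_eq.1 hK).symm.trans (mem_carrier_iff_mk_eq.1 hL)

theorem conj_mem_carrier_iff (K : ConjClasses G) (c : G) {a : G} :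
    c * a * c⁻¹ ∈ K.carrier ↔ a ∈ K.carrier := by
  rw [mem_carrier_iff_mk_eq, mem_carrier_iff_mk_eq,
    ← mk_eq_mk_iff_isConj.2 (isConj_iff.2 ⟨c, rfl⟩)]

theorem smul_carrier_mk {z : G} (hz : z ∈ Subgroup.center G) (a : G) :
    z • (ConjClasses.mk a).carrier = (ConjClasses.mk (z * a)).carrier := by
  ext x
  rw [Set.mem_smul_set_iff_inv_smul_mem, mem_carrier_iff_mk_eq, mem_carrier_iff_mk_eq,
    mk_eq_mk_iff_isConj, mk_eq_mk_iff_isConj, isConj_comm, isConj_iff, isConj_comm, isConj_iff]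
  have hz' := Subgroup.mem_center_iff.1 hz
  refine exists_congr fun c => ?_
  rw [smul_eq_mul, eq_inv_mul_iff_mul_eq, ← mul_assoc c z, hz' c]
  simp only [mul_assoc]

theorem smul_carrier_mk_eq_iff {z : G} (hz : z ∈ Subgroup.center G) (a b : G) :
    z • (ConjClasses.mk a).carrier = (ConjClasses.mk b).carrier ↔ IsConj (z * a) b := by
  rw [smul_carrier_mk hz, carrier_injective.eq_iff, mk_eq_mk_iff_isConj]

theorem exists_smul_carrier_eq {z : G} (hz : z ∈ Subgroup.center G) (K : ConjClasses G) :
    ∃ L : ConjClasses G, z • K.carrier = L.carrier := by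
  obtain ⟨a, rfl⟩ := exists_rep K
  exact ⟨ConjClasses.mk (z * a), smul_carrier_mk hz a⟩

theorem inv_mul_mem_carrier_iff {z g : G} (hz : z ∈ Subgroup.center G) {K L : ConjClasses G}
    (hg : g ∈ L.carrier) : z⁻¹ * g ∈ K.carrier ↔ z • K.carrier = L.carrier := by
  obtain ⟨M, hM⟩ := exists_smul_carrier_eq hz K
  rw [← smul_eq_mul, ← Set.mem_smul_set_iff_inv_smul_mem, hM, carrier_injective.eq_iff]
  exact ⟨fun h => eq_of_mem_carrier h hg, fun h => h ▸ hg⟩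

end ConjClasses

open MonoidAlgebra

section ClassSum

variable {G : Type*} [Group G]

theorem coeff_eq_of_isConj_of_mem_center {y : MonoidAlgebra ℂ G}
    (hy : y ∈ Subalgebra.center ℂ (MonoidAlgebra ℂ G)) {a b : G} (h : IsConj a b) :
    y.coeff a = y.coeff b := by
  obtain ⟨c, rfl⟩ := isConj_iff.1 h
  have hc := congrArg (coeff · (c * a)) (Subalgebra.mem_center_iff.1 hy (single c 1))
  simpa using hc

variable [Finite G]

theorem coeff_classSum (K : ConjClasses G) (g : G) :
    (classSum K).coeff g = K.carrier.indicator 1 g := by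
  classical
  rw [classSum, finsum_mem_eq_finite_toFinset_sum _ K.carrier.toFinite, coeff_sum,
    Finset.sum_apply', Set.indicator_apply]
  simp [coeff_single, Finsupp.single_apply]

theorem single_mul_classSum {z : G} {K L : ConjClasses G} (h : z • K.carrier = L.carrier) :
    single z (1 : ℂ) * classSum K = classSum L := by
  ext g
  rw [coeff_single_mul_apply, one_mul, coeff_classSum, coeff_classSum, ← h]
  classical
  simp only [Set.indicator_apply, Set.mem_smul_set_iff_inv_smul_mem, smul_eq_mul, Pi.one_apply]

theorem coeff_classSum_conj (K : ConjClasses G) (c a : G) :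
    (classSum K).coeff (c * a * c⁻¹) = (classSum K).coeff a := by
  classical
  simp only [coeff_classSum, Set.indicator_apply, K.conj_mem_carrier_iff, Pi.one_apply]

theorem classSum_mem_center (K : ConjClasses G) :
    classSum K ∈ Subalgebra.center ℂ (MonoidAlgebra ℂ G) := by
  refine Subalgebra.mem_center_iff.2 fun x => ?_
  ext g
  rw [coeff_mul_apply_left, coeff_mul_apply_right]
  refine Finsupp.sum_congr fun h _ => ?_
  rw [mul_comm, show g * h⁻¹ = h * (h⁻¹ * g) * h⁻¹ by group, coeff_classSum_conj]

theorem mem_span_classSum_of_mem_center {y : MonoidAlgebra ℂ G}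
    (hy : y ∈ Subalgebra.center ℂ (MonoidAlgebra ℂ G)) :
    y ∈ Submodule.span ℂ (Set.range (classSum (G := G))) := by
  have := Fintype.ofFinite (ConjClasses G)
  refine (Submodule.mem_span_range_iff_exists_fun ℂ).2
    ⟨fun K => y.coeff (Quotient.out K), ?_⟩
  ext g
  rw [coeff_sum, Finset.sum_apply', Finset.sum_eq_single (ConjClasses.mk g)]
  · rw [coeff_smul_apply, coeff_classSum, Set.indicator_of_mem ConjClasses.mem_carrier_mk,
      Pi.one_apply, smul_eq_mul, mul_one]
    exact coeff_eq_of_isConj_of_mem_center hy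
      (ConjClasses.mk_eq_mk_iff_isConj.1 (Quotient.out_eq _))
  · intro K _ hK
    rw [coeff_smul_apply, coeff_classSum, Set.indicator_of_notMem
      (fun hg => hK (ConjClasses.mem_carrier_iff_mk_eq.1 hg).symm), smul_zero]
  · exact fun h => absurd (Finset.mem_univ _) h

end ClassSum

section Ephi

theorem mem_annZ {G : Type*} [Group G] {Z : Subgroup G} {K : ConjClasses G} {z : ↥Z} :
    z ∈ annZ Z K ↔ (z : G) • K.carrier = K.carrier :=
  Iff.rfl

variable {G : Type*} [Group G] [Finite G] (Z : Subgroup G) (φ : ↥Z →* ℂˣ)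

theorem coeff_ephi_mul (x : MonoidAlgebra ℂ G) (g : G) :
    (ephi Z φ * x).coeff g =
      (Nat.card Z : ℂ)⁻¹ * ∑ᶠ z : ↥Z, starRingEnd ℂ (φ z) * x.coeff ((z : G)⁻¹ * g) := by
  have := Fintype.ofFinite Z
  simp only [ephi, finsum_eq_sum_of_fintype, smul_mul_assoc, Finset.sum_mul, coeff_smul_apply,
    coeff_sum, Finset.sum_apply', coeff_single_mul_apply, smul_eq_mul]

theorem ephi_mul_single (z : ↥Z) :
    ephi Z φ * single (z : G) 1 = starRingEnd ℂ (φ z⁻¹ : ℂ) • ephi Z φ := by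
  have := Fintype.ofFinite Z
  rw [ephi, smul_mul_assoc, smul_comm (starRingEnd ℂ _) (Nat.card Z : ℂ)⁻¹]
  congr 1
  rw [finsum_eq_sum_of_fintype, Finset.sum_mul, Finset.smul_sum]
  apply Fintype.sum_equiv (Equiv.mulRight z)
  intro w
  rw [Equiv.coe_mulRight, single_mul_single, mul_one, smul_single, Subgroup.coe_mul, smul_eq_mul,
    mul_comm, ← map_mul, ← Units.val_mul, ← map_mul, mul_inv_cancel_right]

theorem ephi_mul_classSum_eq_zero {K : ConjClasses G} (hK : ¬ annZ Z K ≤ φ.ker) :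
    ephi Z φ * classSum K = 0 := by
  obtain ⟨z, hzK, hzφ⟩ := SetLike.not_le_iff_exists.1 hK
  have hfix :
      starRingEnd ℂ (φ z⁻¹ : ℂ) • (ephi Z φ * classSum K) = ephi Z φ * classSum K := by
    rw [← smul_mul_assoc, ← ephi_mul_single, mul_assoc, single_mul_classSum (mem_annZ.1 hzK)]
  have hne : starRingEnd ℂ (φ z⁻¹ : ℂ) ≠ 1 := by
    rw [Ne, map_eq_one_iff _ (RingHom.injective _), Units.val_eq_one, map_inv, inv_eq_one]
    exact hzφ
  have hzero : (starRingEnd ℂ (φ z⁻¹ : ℂ) - 1) • (ephi Z φ * classSum K) = 0 := by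
    rw [sub_smul, one_smul, hfix, sub_self]
  exact (smul_eq_zero.1 hzero).resolve_left (sub_ne_zero.2 hne)

variable {Z}

theorem coeff_ephi_mul_classSum (hZ : Z ≤ Subgroup.center G) {K L : ConjClasses G} {g : G}
    (hg : g ∈ L.carrier) :
    (ephi Z φ * classSum K).coeff g = (Nat.card Z : ℂ)⁻¹ *
      ∑ᶠ z : ↥Z, if (z : G) • K.carrier = L.carrier then starRingEnd ℂ (φ z) else 0 := by
  classical
  rw [coeff_ephi_mul]
  congr 1
  refine finsum_congr fun z => ?_
  rw [coeff_classSum, Set.indicator_apply, ConjClasses.inv_mul_mem_carrier_iff (hZ z.2) hg]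
  simp only [Pi.one_apply, mul_ite, mul_one, mul_zero]

theorem coeff_ephi_mul_classSum_of_annZ_le (hZ : Z ≤ Subgroup.center G) {K : ConjClasses G}
    (hK : annZ Z K ≤ φ.ker) {g : G} (hg : g ∈ K.carrier) :
    (ephi Z φ * classSum K).coeff g = (Nat.card Z : ℂ)⁻¹ * Nat.card (annZ Z K) := by
  classical
  have := Fintype.ofFinite Z
  rw [coeff_ephi_mul_classSum φ hZ hg, finsum_eq_sum_of_fintype]
  congr 1
  have hφ : ∀ z ∈ annZ Z K, starRingEnd ℂ (φ z) = 1 := fun z hz => by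
    rw [(MonoidHom.mem_ker).1 (hK hz), Units.val_one, map_one]
  simp_rw [← mem_annZ]
  rw [Finset.sum_ite, Finset.sum_const_zero, add_zero,
    Finset.sum_congr rfl fun z hz => hφ z (Finset.mem_filter.1 hz).2, Finset.sum_const,
    nsmul_one, ← Fintype.card_subtype, Nat.card_eq_fintype_card]

theorem coeff_ephi_mul_classSum_of_not_rel (hZ : Z ≤ Subgroup.center G) {K L : ConjClasses G}
    (hKL : ¬ ∃ z ∈ Z, z • K.carrier = L.carrier) {g : G} (hg : g ∈ L.carrier) :
    (ephi Z φ * classSum K).coeff g = 0 := by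
  rw [coeff_ephi_mul_classSum φ hZ hg,
    finsum_eq_zero_of_forall_eq_zero fun z : ↥Z => if_neg fun h => hKL ⟨z, z.2, h⟩, mul_zero]

end Ephi

theorem LinearIndependent.of_pairwise_dual_eq_zero_of_ne_zero {K V ι : Type*} [Field K]
    [AddCommGroup V] [Module K V] (v : ι → V) (f : ι → Module.Dual K V)
    (h1 : Pairwise fun i j => f i (v j) = 0) (h2 : ∀ i, f i (v i) ≠ 0) :
    LinearIndependent K v :=
  .of_pairwise_dual_eq_zero_one v (fun i => (f i (v i))⁻¹ • f i)
    (fun i j hij => by simp [h1 hij]) (fun i => by simp [h2 i])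

theorem annZ_repClass_le {G : Type*} [Group G] {Z : Subgroup G} {φ : ↥Z →* ℂˣ}
    (o : RepIdx G Z φ) : annZ Z (repClass o) ≤ φ.ker :=
  (Quotient.out o).2

section Basis

variable {G : Type*} [Group G] [Finite G] {Z : Subgroup G} (φ : ↥Z →* ℂˣ)

theorem linearIndependent_ephi_mul_classSum (hZ : Z ≤ Subgroup.center G) :
    LinearIndependent ℂ fun o : RepIdx G Z φ => ephi Z φ * classSum (repClass o) := by
  refine .of_pairwise_dual_eq_zero_of_ne_zero _
    (fun o => (MonoidAlgebra.basis G ℂ).coord (Quotient.out (repClass o))) (fun o o' hoo' => ?_)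
    fun o => ?_
  · exact coeff_ephi_mul_classSum_of_not_rel φ hZ
      (fun h => hoo' (Quotient.out_equiv_out.1 h).symm) (ConjClasses.out_mem_carrier _)
  · show (ephi Z φ * classSum (repClass o)).coeff (Quotient.out (repClass o)) ≠ 0
    rw [coeff_ephi_mul_classSum_of_annZ_le φ hZ (annZ_repClass_le o)
      (ConjClasses.out_mem_carrier _)]
    exact mul_ne_zero (inv_ne_zero (Nat.cast_ne_zero.2 Nat.card_pos.ne'))
      (Nat.cast_ne_zero.2 Nat.card_pos.ne')

theorem ephi_mul_classSum_mem_span (K : ConjClasses G) :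
    ephi Z φ * classSum K ∈
      Submodule.span ℂ
        (Set.range fun o : RepIdx G Z φ => ephi Z φ * classSum (repClass o)) := by
  by_cases hK : annZ Z K ≤ φ.ker
  · obtain ⟨z, hz, hzK⟩ :=
      Quotient.mk_out (s := zSetoid Z fun K => annZ Z K ≤ φ.ker) ⟨K, hK⟩
    rw [← single_mul_classSum hzK, ← mul_assoc, ephi_mul_single Z φ ⟨z, hz⟩,
      smul_mul_assoc]
    exact Submodule.smul_mem _ _ (Submodule.subset_span ⟨_, rfl⟩)
  · rw [ephi_mul_classSum_eq_zero Z φ hK]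
    exact Submodule.zero_mem _

theorem span_ephi_mul_classSum :
    Submodule.span ℂ (Set.range fun o : RepIdx G Z φ => ephi Z φ * classSum (repClass o)) =
      (Subalgebra.center ℂ (MonoidAlgebra ℂ G)).toSubmodule.map
        (LinearMap.mulLeft ℂ (ephi Z φ)) := by
  refine le_antisymm (Submodule.span_le.2 ?_) ?_
  · rintro _ ⟨o, rfl⟩
    exact ⟨_, classSum_mem_center _, rfl⟩
  · rintro _ ⟨y, hy, rfl⟩
    refine (Submodule.map_span_le _ _ _).2 ?_ (Submodule.mem_map_of_mem
      (mem_span_classSum_of_mem_center hy))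
    rintro _ ⟨K, rfl⟩
    exact ephi_mul_classSum_mem_span φ K

end Basis

section QuotientGroup

variable {G : Type*} [Group G]

theorem QuotientGroup.mk_mem_center {N : Subgroup G} [N.Normal] {z : G}
    (hz : z ∈ Subgroup.center G) : (z : G ⧸ N) ∈ Subgroup.center (G ⧸ N) := by
  refine Subgroup.mem_center_iff.2 fun g => ?_
  induction g using QuotientGroup.induction_on with
  | H g => rw [← QuotientGroup.mk_mul, ← QuotientGroup.mk_mul, Subgroup.mem_center_iff.1 hz g]

theorem QuotientGroup.isConj_mk_iff {N : Subgroup G} [N.Normal] (hN : N ≤ Subgroup.center G)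
    (x y : G) : IsConj (x : G ⧸ N) (y : G ⧸ N) ↔ ∃ n ∈ N, IsConj (n * x) y := by
  constructor
  · rw [isConj_iff]
    rintro ⟨c, hc⟩
    induction c using QuotientGroup.induction_on with | H c => ?_
    rw [← QuotientGroup.mk_inv, ← QuotientGroup.mk_mul, ← QuotientGroup.mk_mul,
      QuotientGroup.eq] at hc
    obtain ⟨m, hm, rfl⟩ : ∃ m ∈ N, y = c * x * c⁻¹ * m := ⟨_, hc, by group⟩
    have hm' := Subgroup.mem_center_iff.1 (hN hm)
    refine ⟨m, hm, isConj_iff.2 ⟨c, ?_⟩⟩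
    calc c * (m * x) * c⁻¹ = m * (c * x * c⁻¹) := by rw [← mul_assoc c, hm' c]; group
      _ = c * x * c⁻¹ * m := (hm' _).symm
  · rintro ⟨n, hn, h⟩
    have := (QuotientGroup.mk' N).map_isConj h
    rwa [map_mul, QuotientGroup.mk'_apply, (QuotientGroup.eq_one_iff n).2 hn, one_mul] at this

end QuotientGroup

section Counting

variable {G : Type*} [Group G] {Z : Subgroup G}

theorem mem_annZ_mk_iff (hZ : Z ≤ Subgroup.center G) {z : ↥Z} (a : G) :
    z ∈ annZ Z (ConjClasses.mk a) ↔ IsConj (z * a) a :=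
  ConjClasses.smul_carrier_mk_eq_iff (hZ z.2) a a

theorem map_mk'_le_center (hZ : Z ≤ Subgroup.center G) (N : Subgroup G) [N.Normal] :
    Z.map (QuotientGroup.mk' N) ≤ Subgroup.center (G ⧸ N) :=
  Subgroup.map_le_iff_le_comap.2 fun _ hz => QuotientGroup.mk_mem_center (hZ hz)

variable (A : Subgroup ↥Z) [(A.map Z.subtype).Normal]

theorem annZ_map_mk'_eq_bot_iff (hZ : Z ≤ Subgroup.center G) (K : ConjClasses G) :
    annZ (Z.map (QuotientGroup.mk' (A.map Z.subtype)))
        (K.map (QuotientGroup.mk' (A.map Z.subtype))) = ⊥ ↔ annZ Z K ≤ A := by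
  obtain ⟨a, rfl⟩ := ConjClasses.mk_surjective K
  have hN := (Subgroup.map_subtype_le A).trans hZ
  have hZN := map_mk'_le_center hZ (A.map Z.subtype)
  have hA (z : ↥Z) : ((z : G) : G ⧸ A.map Z.subtype) = 1 ↔ z ∈ A :=
    (QuotientGroup.eq_one_iff _).trans (Subgroup.mem_map_iff_mem Z.subtype_injective)
  rw [ConjClasses.map_mk, Subgroup.eq_bot_iff_forall]
  constructor
  · intro h z hz
    rw [mem_annZ_mk_iff hZ] at hz
    refine (hA z).1 (congrArg Subtype.val (h ⟨_, z, z.2, rfl⟩ ((mem_annZ_mk_iff hZN _).2 ?_)))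
    simpa using (QuotientGroup.mk' (A.map Z.subtype)).map_isConj hz
  · rintro h ⟨_, z, hz, rfl⟩ hmem
    rw [mem_annZ_mk_iff hZN] at hmem
    obtain ⟨_, ⟨n, hnA, rfl⟩, hconj⟩ :=
      (QuotientGroup.isConj_mk_iff hN (z * a) a).1 (by simpa using hmem)
    have hzA : n * ⟨z, hz⟩ ∈ A :=
      h ((mem_annZ_mk_iff hZ a).2 (by simpa [mul_assoc] using hconj))
    exact Subtype.ext ((hA ⟨z, hz⟩).2 ((mul_mem_cancel_left hnA).1 hzA))

theorem exists_smul_map_mk'_carrier_iff (hZ : Z ≤ Subgroup.center G) (K L : ConjClasses G) :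
    (∃ z ∈ Z.map (QuotientGroup.mk' (A.map Z.subtype)),
        z • (K.map (QuotientGroup.mk' (A.map Z.subtype))).carrier =
          (L.map (QuotientGroup.mk' (A.map Z.subtype))).carrier) ↔
      ∃ z ∈ Z, z • K.carrier = L.carrier := by
  obtain ⟨a, rfl⟩ := ConjClasses.mk_surjective K
  obtain ⟨b, rfl⟩ := ConjClasses.mk_surjective L
  have hN := (Subgroup.map_subtype_le A).trans hZ
  have hZN := map_mk'_le_center hZ (A.map Z.subtype)
  simp only [ConjClasses.map_mk]
  constructor
  · rintro ⟨_, ⟨z, hz, rfl⟩, h⟩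
    rw [ConjClasses.smul_carrier_mk_eq_iff (hZN ⟨z, hz, rfl⟩)] at h
    obtain ⟨_, ⟨n, -, rfl⟩, hconj⟩ :=
      (QuotientGroup.isConj_mk_iff hN (z * a) b).1 (by simpa using h)
    refine ⟨n * z, mul_mem n.2 hz, ?_⟩
    rw [ConjClasses.smul_carrier_mk_eq_iff (hZ (mul_mem n.2 hz)), mul_assoc]
    exact hconj
  · rintro ⟨z, hz, h⟩
    refine ⟨_, ⟨z, hz, rfl⟩, ?_⟩
    rw [ConjClasses.smul_carrier_mk_eq_iff (hZ hz)] at h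
    rw [ConjClasses.smul_carrier_mk_eq_iff (hZN ⟨z, hz, rfl⟩), ← map_mul]
    exact (QuotientGroup.mk' _).map_isConj h

theorem card_quotient_zSetoid_annZ_le (hZ : Z ≤ Subgroup.center G) :
    Nat.card (Quotient (zSetoid Z fun K => annZ Z K ≤ A)) =
      nIGZ (G ⧸ A.map Z.subtype) (Z.map (QuotientGroup.mk' (A.map Z.subtype))) ⊥ := by
  refine Nat.card_eq_of_bijective (Quotient.map
    (fun K => ⟨K.1.map (QuotientGroup.mk' _), (annZ_map_mk'_eq_bot_iff A hZ K.1).2 K.2⟩)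
    fun K L h => (exists_smul_map_mk'_carrier_iff A hZ K.1 L.1).2 h) ⟨?_, ?_⟩
  · rintro ⟨K⟩ ⟨L⟩ h
    exact Quotient.sound ((exists_smul_map_mk'_carrier_iff A hZ K.1 L.1).1 (Quotient.exact h))
  · rintro ⟨⟨K, hK⟩⟩
    obtain ⟨K, rfl⟩ := ConjClasses.map_surjective (QuotientGroup.mk'_surjective _) K
    exact ⟨⟦⟨K, (annZ_map_mk'_eq_bot_iff A hZ K).1 hK⟩⟧, rfl⟩

end Counting

/-- `B(G)_φ` is a basis of `e_φ Z(ℂG)`, whose dimension is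
`|I(G/ker φ : Z/ker φ)_{1}|`. -/
theorem stmt8 (G : Type*) [Group G] [Finite G] (Z : Subgroup G)
    (hZ : Z ≤ Subgroup.center G) (φ : ↥Z →* ℂˣ)
    [hN : ((φ.ker).map Z.subtype).Normal] :
    LinearIndependent ℂ (fun o : RepIdx G Z φ => ephi Z φ * classSum (repClass o)) ∧
      Submodule.span ℂ
          (Set.range fun o : RepIdx G Z φ => ephi Z φ * classSum (repClass o)) =
        Submodule.map (LinearMap.mulLeft ℂ (ephi Z φ))
          (Subalgebra.center ℂ (MonoidAlgebra ℂ G)).toSubmodule ∧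
      Module.finrank ℂ
          ↥(Submodule.map (LinearMap.mulLeft ℂ (ephi Z φ))
            (Subalgebra.center ℂ (MonoidAlgebra ℂ G)).toSubmodule) =
        nIGZ (G ⧸ φ.ker.map Z.subtype)
          (Z.map (QuotientGroup.mk' (φ.ker.map Z.subtype))) ⊥ := by
  have hli := linearIndependent_ephi_mul_classSum φ hZ
  have := Fintype.ofFinite (RepIdx G Z φ)
  refine ⟨hli, span_ephi_mul_classSum φ, ?_⟩
  rw [← span_ephi_mul_classSum φ, finrank_span_eq_card hli, ← Nat.card_eq_fintype_card]
  exact card_quotient_zSetoid_annZ_le φ.ker hZ
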